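/- Consider the five polynomial vector fields on ℝ^5 (with coordinates (X,Y,U1,U2,U3)): η_1 = (6X, 5Y, 4U1, 3U2, 2U3); η_2 = (4U3·Y+2U1·U2, X, −5Y−3U2·U3, −3U1, −4U2); η_3 = ((4/3)U2·Y, −(1/9)U3·Y, X+(1/9)U1·U3, −(5/3)Y, −(2/3)U1+(2/9)U3²); η_4 = ((3/2)U1·Y, −(1/4)U2·Y, −2U3·Y, X+(1/4)U2², −(5/2)Y); η_5 = ((5/3)Y²+(1/9)U2·U3·Y, (−(2/9)U1+(2/27)U3²)Y, −(4/3)U2·Y+(2/9)U1²−(2/27)U1·U3², −(2/9)U3·Y, X+(5/9)U1·U3−(4/27)U3³). Then the determinant of the 5×5 matrix over ℝ[X,Y,U1,U2,U3] whose i-th row is η_i is a nonzero polynomial; in particular η_1,…,η_5 are linearly independent over the ring of polynomial functions on ℝ^5. -/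

import Mathlib

open MvPolynomial

/-- The matrix over `ℝ[X,Y,U1,U2,U3]` (variables indexed `0,1,2,3,4`) whose rows are the
five generators `η₁,…,η₅` of `Lift(F₃₂)`. -/
noncomputable def liftF32Matrix : Matrix (Fin 5) (Fin 5) (MvPolynomial (Fin 5) ℝ) :=
  !![C (6:ℝ) * X 0, C (5:ℝ) * X 1, C (4:ℝ) * X 2, C (3:ℝ) * X 3, C (2:ℝ) * X 4;
     C (4:ℝ) * X 4 * X 1 + C (2:ℝ) * X 2 * X 3, X 0,
       C (-5:ℝ) * X 1 - C (3:ℝ) * X 3 * X 4, C (-3:ℝ) * X 2, C (-4:ℝ) * X 3;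
     C ((4/3):ℝ) * X 3 * X 1, C (-(1/9):ℝ) * X 4 * X 1, X 0 + C ((1/9):ℝ) * X 2 * X 4,
       C (-(5/3):ℝ) * X 1, C (-(2/3):ℝ) * X 2 + C ((2/9):ℝ) * (X 4)^2;
     C ((3/2):ℝ) * X 2 * X 1, C (-(1/4):ℝ) * X 3 * X 1, C (-2:ℝ) * X 4 * X 1,
       X 0 + C ((1/4):ℝ) * (X 3)^2, C (-(5/2):ℝ) * X 1;
     C ((5/3):ℝ) * (X 1)^2 + C ((1/9):ℝ) * X 3 * X 4 * X 1,
       (C (-(2/9):ℝ) * X 2 + C ((2/27):ℝ) * (X 4)^2) * X 1,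
       C (-(4/3):ℝ) * X 3 * X 1 + C ((2/9):ℝ) * (X 2)^2 - C ((2/27):ℝ) * X 2 * (X 4)^2,
       C (-(2/9):ℝ) * X 4 * X 1,
       X 0 + C ((5/9):ℝ) * X 2 * X 4 + C (-(4/27):ℝ) * (X 4)^3]

theorem Matrix.det_ne_zero_of_det_map_ne_zero {n R S : Type*} [Fintype n] [DecidableEq n]
    [CommRing R] [CommRing S] (f : R →+* S) {M : Matrix n n R} (h : (M.map f).det ≠ 0) :
    M.det ≠ 0 := by
  intro hM
  exact h (by simpa [hM] using (f.map_det M).symm)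

-- `Pi.single 0 1` is the point `(X, Y, U₁, U₂, U₃) = (1, 0, 0, 0, 0)`: every off-diagonal entry
-- vanishes there, so the determinant specializes to `6`.
theorem liftF32Matrix_map_eval_single_zero :
    liftF32Matrix.map (eval (Pi.single 0 1)) = Matrix.diagonal ![6, 1, 1, 1, 1] := by
  ext i j
  fin_cases i <;> fin_cases j <;> simp [liftF32Matrix]

/-- The determinant of the matrix whose rows are the five generators of `Lift(F₃₂)` is a
nonzero polynomial; in particular `η₁,…,η₅` are linearly independent over the polynomial
ring. -/
theorem det_liftF32Matrix_ne_zero : liftF32Matrix.det ≠ 0 := by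
  apply Matrix.det_ne_zero_of_det_map_ne_zero (eval (Pi.single 0 1))
  rw [liftF32Matrix_map_eval_single_zero, Matrix.det_diagonal]
  norm_num [Fin.prod_univ_succ]
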